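/- For any classical instance I = (A, ι^n) of unsigned strings such that b_ρ(I) > 0, Σ_A \ Σ_{ι^n} = ∅ (A contains no α-element), and A has at least one decreasing strip, there exists a reversal ρ such that b_ρ(A·ρ, ι^n) ≤ b_ρ(A, ι^n) − 1, i.e., ρ removes at least one unsigned-reversal breakpoint of A. -/

import Mathlib

/-- A gene of the origin string: either a label in `{1, …, n}` (`some x`) or an
`α`-element (`none`), i.e. a gene absent from the target genome. -/
abbrev Gene := Option ℕ

/-- `A` is a valid origin string for a classical instance `I = (A, ι^n)`:
all its labels lie in `{1, …, n}` and each label occurs at most once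
(`α`-elements may repeat). -/
def ValidString (n : ℕ) (A : List Gene) : Prop :=
  (∀ x : ℕ, some x ∈ A → 1 ≤ x ∧ x ≤ n) ∧ (∀ x : ℕ, A.count (some x) ≤ 1)

/-- The extended version of `A`: `A_0 = 0` and `A_{|A|+1} = n+1` are appended. -/
def extStr (n : ℕ) (A : List Gene) : List Gene :=
  some 0 :: (A ++ [some (n + 1)])

/-- `|Σ_{ι^n} \ Σ_A|`: the number of labels of the target absent from `A`. -/
def missingCount (n : ℕ) (A : List Gene) : ℕ :=
  ((Finset.Icc 1 n).filter (fun x => some x ∉ A)).card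

/-- `posterior(x, I)`: the smallest common label greater than `x`
(`n+1` if there is none, `α` for `x = α`). -/
def postOf (n : ℕ) (A : List Gene) : Gene → Gene
  | none => none
  | some x =>
    if h : ((Finset.Icc 1 n).filter (fun y => some y ∈ A ∧ x < y)).Nonempty then
      some (((Finset.Icc 1 n).filter (fun y => some y ∈ A ∧ x < y)).min' h)
    else
      some (n + 1)

/-- `anterior(x, I)`: the largest common label smaller than `x`
(`0` if there is none, `α` for `x = α`). -/
def antOf (n : ℕ) (A : List Gene) : Gene → Gene
  | none => none
  | some x =>
    if h : ((Finset.Icc 1 n).filter (fun y => some y ∈ A ∧ y < x)).Nonempty then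
      some (((Finset.Icc 1 n).filter (fun y => some y ∈ A ∧ y < x)).max' h)
    else
      some 0

/-- `b_τ(I)`: the number of transposition breakpoints of the instance `I = (A, ι^n)`. -/
def bT (n : ℕ) (A : List Gene) : ℕ :=
  ((Finset.range (A.length + 1)).filter (fun t =>
    (extStr n A).getD (t + 1) none ≠ postOf n A ((extStr n A).getD t none))).card

/-- `b_ρ(I)`: the number of unsigned-reversal breakpoints of the instance `I = (A, ι^n)`. -/
def bR (n : ℕ) (A : List Gene) : ℕ :=
  ((Finset.range (A.length + 1)).filter (fun t =>
    (extStr n A).getD (t + 1) none ≠ postOf n A ((extStr n A).getD t none) ∧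
    (extStr n A).getD (t + 1) none ≠ antOf n A ((extStr n A).getD t none))).card

/-- The reversal `ρ(i,j)`, `1 ≤ i ≤ j ≤ |A|`, with explicit parameters `i`, `j`:
it reverses the segment `(A_i … A_j)`, transforming `A` into `A'`. -/
def RevAt (A : List Gene) (i j : ℕ) (A' : List Gene) : Prop :=
  1 ≤ i ∧ i ≤ j ∧ j ≤ A.length ∧
  A' = A.take (i - 1) ++ ((A.drop (i - 1)).take (j - i + 1)).reverse ++ A.drop j

/-- `A'` is obtained from `A` by a reversal. -/
def RevN (A A' : List Gene) : Prop := ∃ i j : ℕ, RevAt A i j A'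

/-- `A'` is obtained from `A` by a transposition `τ(i,j,k)`, `1 ≤ i < j < k ≤ |A|+1`,
exchanging the adjacent segments `(A_i … A_{j−1})` and `(A_j … A_{k−1})`. -/
def TranspN (A A' : List Gene) : Prop :=
  ∃ i j k : ℕ, 1 ≤ i ∧ i < j ∧ j < k ∧ k ≤ A.length + 1 ∧
    A' = A.take (i - 1) ++ (A.drop (j - 1)).take (k - j) ++
         (A.drop (i - 1)).take (j - i) ++ A.drop (k - 1)

/-- `A'` is obtained from `A` by an insertion `φ(i,σ)`: a nonempty repetition-free
string `σ`, consisting only of labels of `Σ_{ι^n} \ Σ_A`, is inserted after position `i`. -/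
def InsN (n : ℕ) (A A' : List Gene) : Prop :=
  ∃ (i : ℕ) (σ : List Gene), i ≤ A.length ∧ σ ≠ [] ∧ σ.Nodup ∧
    (∀ e ∈ σ, ∃ x : ℕ, e = some x ∧ 1 ≤ x ∧ x ≤ n ∧ some x ∉ A) ∧
    A' = A.take i ++ σ ++ A.drop i

/-- `A'` is obtained from `A` by a deletion `ψ(i,j)`: the segment `(A_i … A_j)`,
consisting only of `α`-elements, is removed. -/
def DelN (A A' : List Gene) : Prop :=
  ∃ i j : ℕ, 1 ≤ i ∧ i ≤ j ∧ j ≤ A.length ∧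
    (∀ e ∈ (A.drop (i - 1)).take (j - i + 1), e = none) ∧
    A' = A.take (i - 1) ++ A.drop j

/-- The kinds of operations on strings. -/
inductive StrOp : Type
  | rev
  | transp
  | ins
  | del
deriving DecidableEq

def strOpRel (n : ℕ) : StrOp → List Gene → List Gene → Prop
  | StrOp.rev => RevN
  | StrOp.transp => TranspN
  | StrOp.ins => InsN n
  | StrOp.del => DelN

/-- The target string `ι^n = (1 2 … n)`. -/
def idList (n : ℕ) : List Gene := (List.range n).map (fun x => some (x + 1))

/-- `A` can be transformed into `ι^n` by a sequence of `s` operations of the model `M`. -/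
def Reaches (n : ℕ) (M : Set StrOp) : ℕ → List Gene → Prop
  | 0, A => A = idList n
  | s + 1, A => ∃ op ∈ M, ∃ A', strOpRel n op A A' ∧ Reaches n M s A'

/-- `d_M(A, ι^n)`: the minimum number of operations of the model `M` transforming
`A` into `ι^n` (`∞` if no such sequence exists). -/
noncomputable def distM (n : ℕ) (M : Set StrOp) (A : List Gene) : ℕ∞ :=
  sInf {c : ℕ∞ | ∃ s : ℕ, Reaches n M s A ∧ c = (s : ℕ∞)}

/-- The model `M^{φψ}_ρ`: reversals, insertions and deletions. -/
def Mrev : Set StrOp := {StrOp.rev, StrOp.ins, StrOp.del}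
/-- The model `M^{φψ}_τ`: transpositions, insertions and deletions. -/
def Mtra : Set StrOp := {StrOp.transp, StrOp.ins, StrOp.del}
/-- The model `M^{φψ}_{ρ,τ}`: reversals, transpositions, insertions and deletions. -/
def Mrevtra : Set StrOp := {StrOp.rev, StrOp.transp, StrOp.ins, StrOp.del}

/-- `(u, v)` is an unsigned-reversal breakpoint of the instance `I = (A, ι^n)`. -/
def IsBreakR (n : ℕ) (A : List Gene) (u v : Gene) : Prop :=
  v ≠ postOf n A u ∧ v ≠ antOf n A u

/-- `A` has at least one decreasing strip: either some non-breakpoint adjacency is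
decreasing (the right element is the anterior of the left one), or some interior
non-`α` element is a singleton strip (it has breakpoints on both sides). -/
def HasDecStrip (n : ℕ) (A : List Gene) : Prop :=
  (∃ t : ℕ, t + 1 < (extStr n A).length ∧
    (extStr n A).getD t none ≠ none ∧
    (extStr n A).getD (t + 1) none = antOf n A ((extStr n A).getD t none)) ∨
  (∃ t : ℕ, 1 ≤ t ∧ t + 1 < (extStr n A).length ∧
    (extStr n A).getD t none ≠ none ∧
    IsBreakR n A ((extStr n A).getD (t - 1) none) ((extStr n A).getD t none) ∧
    IsBreakR n A ((extStr n A).getD t none) ((extStr n A).getD (t + 1) none))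

/-!
Among the right ends of decreasing strips pick the one carrying the smallest label `k`, and let
`m` be the anterior of `k`, at position `q`. The pair `(A_q, A_{q+1})` is a breakpoint: if
`A_{q+1} = k`, then `(m, k)` would be an increasing adjacency ending at `k`; if `A_{q+1}` were the
anterior of `m`, the decreasing strip through `A_{q+1}` would end at a label below `k`.
Reversing the segment between the breakpoint after `m` and the one after `k` makes `m` and `k`
adjacent, removing two breakpoints and creating at most one.
-/

namespace List

variable {α : Type*} (p : α → α → Prop) [DecidableRel p]

def countPairs : List α → ℕ
  | x :: y :: l => (if p x y then 1 else 0) + countPairs (y :: l)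
  | _ => 0

theorem countPairs_congr {q : α → α → Prop} [DecidableRel q] (h : ∀ u v, p u v ↔ q u v)
    (l : List α) : countPairs p l = countPairs q l := by
  induction l with
  | nil => rfl
  | cons x l ih =>
    cases l with
    | nil => rfl
    | cons y t => simp only [countPairs, h] at ih ⊢; rw [ih]

theorem countPairs_append_cons (l₁ : List α) (x : α) (l₂ : List α) :
    countPairs p (l₁ ++ x :: l₂) = countPairs p (l₁ ++ [x]) + countPairs p (x :: l₂) := by
  induction l₁ with
  | nil => simp [countPairs]
  | cons a l ih =>
    cases l with
    | nil => simp [countPairs]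
    | cons b l => simp only [cons_append, countPairs] at ih ⊢; omega

theorem countPairs_reverse {l : List α} (hp : ∀ u ∈ l, ∀ v ∈ l, p u v → p v u) :
    countPairs p l.reverse = countPairs p l := by
  induction l with
  | nil => rfl
  | cons x l ih =>
    cases l with
    | nil => rfl
    | cons y t =>
      have hxy : p x y ↔ p y x := ⟨hp x (by simp) y (by simp), hp y (by simp) x (by simp)⟩
      have ih := ih fun u hu v hv => hp u (mem_cons_of_mem _ hu) v (mem_cons_of_mem _ hv)
      rw [reverse_cons, reverse_cons, append_assoc, singleton_append, countPairs_append_cons,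
        ← reverse_cons, ih]
      simp only [countPairs, hxy]
      omega

theorem countPairs_cons_append (a : α) {m : List α} (hm : m ≠ []) (l : List α) :
    countPairs p (a :: (m ++ l)) = (if p a (m.head hm) then 1 else 0) + countPairs p (m ++ l) := by
  obtain ⟨u, t, rfl⟩ := exists_cons_of_ne_nil hm
  rfl

theorem countPairs_append_singleton {m : List α} (hm : m ≠ []) (b : α) :
    countPairs p (m ++ [b]) = countPairs p m + (if p (m.getLast hm) b then 1 else 0) := by
  conv_lhs => rw [← dropLast_concat_getLast hm, append_assoc, singleton_append,
    countPairs_append_cons, dropLast_concat_getLast]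
  simp only [countPairs]
  omega

theorem countPairs_append_cons_append (l r : List α) (a b : α) {m : List α} (hm : m ≠ []) :
    countPairs p (l ++ a :: (m ++ b :: r)) =
      countPairs p (l ++ [a]) + (if p a (m.head hm) then 1 else 0) + countPairs p m +
        (if p (m.getLast hm) b then 1 else 0) + countPairs p (b :: r) := by
  rw [countPairs_append_cons, countPairs_cons_append p a hm, countPairs_append_cons p m b r,
    countPairs_append_singleton p hm]
  omega

theorem countPairs_reverse_infix_add_one_le (l r : List α) (a b : α) {m : List α} (hm : m ≠ [])
    (hp : ∀ u ∈ m, ∀ v ∈ m, p u v → p v u) (ha : p a (m.head hm))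
    (hb : p (m.getLast hm) b) (hab : ¬ p a (m.getLast hm)) :
    countPairs p (l ++ a :: (m.reverse ++ b :: r)) + 1 ≤
      countPairs p (l ++ a :: (m ++ b :: r)) := by
  have hm' : m.reverse ≠ [] := by simpa using hm
  rw [countPairs_append_cons_append p l r a b hm, countPairs_append_cons_append p l r a b hm',
    countPairs_reverse p hp, head_reverse, getLast_reverse]
  simp only [if_pos ha, if_pos hb, if_neg hab]
  split <;> omega

theorem card_filter_range_eq_countPairs (l : List α) (d : α) :
    ((Finset.range (l.length - 1)).filter (fun t => p (l.getD t d) (l.getD (t + 1) d))).card =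
      countPairs p l := by
  induction l with
  | nil => rfl
  | cons x l ih =>
    cases l with
    | nil => rfl
    | cons y t =>
      rw [Finset.card_filter] at ih ⊢
      simp only [length_cons, Nat.add_sub_cancel] at ih ⊢
      rw [Finset.sum_range_succ', countPairs, ← ih, add_comm]
      rfl

theorem eq_take_append_getElem_cons {l : List α} {a b : ℕ} (hab : a < b)
    (hb : b + 1 < l.length) :
    l = l.take a ++ l[a] :: ((l.drop (a + 1)).take (b - a) ++ l[b + 1] :: l.drop (b + 2)) := by
  have htake : l.take (b + 1) = l.take a ++ l[a] :: (l.drop (a + 1)).take (b - a) := by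
    rw [show b + 1 = a + 1 + (b - a) by omega, take_add]
    rw [← take_concat_get' l a (by omega), append_assoc, singleton_append]
  conv_lhs => rw [← take_append_drop (b + 1) l, htake, drop_eq_getElem_cons hb]
  simp

theorem countPairs_reverse_segment_add_one_le {l : List α} {a b : ℕ} (hab : a < b)
    (hb : b + 1 < l.length) (hp : ∀ u ∈ l, ∀ v ∈ l, p u v → p v u)
    (ha : p l[a] l[a + 1]) (hb' : p l[b] l[b + 1]) (hab' : ¬ p l[a] l[b]) :
    countPairs p (l.take (a + 1) ++ ((l.drop (a + 1)).take (b - a)).reverse ++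
      l.drop (b + 1)) + 1 ≤ countPairs p l := by
  set m := (l.drop (a + 1)).take (b - a) with hm_def
  have hm : m ≠ [] := by simp [hm_def]; omega
  have hhead : m.head hm = l[a + 1] := by simp [hm_def, head_take, head_drop]
  have hlast : m.getLast hm = l[b] := by
    simp only [hm_def, getLast_eq_getElem, getElem_take, getElem_drop, length_take, length_drop]
    congr 1; omega
  have hsub : ∀ u ∈ m, u ∈ l := fun u hu => mem_of_mem_drop (mem_of_mem_take hu)
  have hrev : l.take (a + 1) ++ m.reverse ++ l.drop (b + 1) =
      l.take a ++ l[a] :: (m.reverse ++ l[b + 1] :: l.drop (b + 2)) := by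
    rw [← take_concat_get' l a (by omega), drop_eq_getElem_cons hb, append_assoc, append_assoc,
      singleton_append]
  calc countPairs p (l.take (a + 1) ++ m.reverse ++ l.drop (b + 1)) + 1
      ≤ countPairs p (l.take a ++ l[a] :: (m ++ l[b + 1] :: l.drop (b + 2))) := by
        rw [hrev]
        refine countPairs_reverse_infix_add_one_le p _ _ _ _ hm
          (fun u hu v hv => hp u (hsub u hu) v (hsub v hv)) ?_ ?_ ?_ <;>
          simpa only [hhead, hlast]
    _ = countPairs p l := by rw [← eq_take_append_getElem_cons hab hb]

end List

section

variable {n : ℕ} {A : List Gene}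

theorem mem_extStr_some {x : ℕ} :
    some x ∈ extStr n A ↔ x = 0 ∨ some x ∈ A ∨ x = n + 1 := by
  simp [extStr]

theorem le_of_some_mem_extStr (hA : ValidString n A) {x : ℕ} (hx : some x ∈ extStr n A) :
    x ≤ n + 1 := by
  rcases mem_extStr_some.mp hx with rfl | hx | rfl
  · omega
  · have := hA.1 x hx; omega
  · rfl

theorem lt_or_eq_of_postOf_eq {x m : ℕ} (h : postOf n A (some x) = some m) :
    x < m ∨ m = n + 1 := by
  simp only [postOf] at h
  split_ifs at h with hne
  · left
    have hmem := Finset.min'_mem _ hne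
    rw [Option.some.inj h] at hmem
    exact (Finset.mem_filter.mp hmem).2.2
  · exact Or.inr (Option.some.inj h).symm

theorem lt_or_eq_of_antOf_eq {x m : ℕ} (h : antOf n A (some x) = some m) : m < x ∨ m = 0 := by
  simp only [antOf] at h
  split_ifs at h with hne
  · left
    have hmem := Finset.max'_mem _ hne
    rw [Option.some.inj h] at hmem
    exact (Finset.mem_filter.mp hmem).2.2
  · exact Or.inr (Option.some.inj h).symm

theorem antOf_some_mem_extStr (x : ℕ) : antOf n A (some x) ∈ extStr n A := by
  simp only [antOf]
  split_ifs with hne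
  · exact mem_extStr_some.mpr (Or.inr (Or.inl (Finset.mem_filter.mp (Finset.max'_mem _ hne)).2.1))
  · exact mem_extStr_some.mpr (Or.inl rfl)

theorem postOf_eq_some_iff (hA : ValidString n A) {x y : ℕ} (hxy : x < y)
    (hy : some y ∈ extStr n A) :
    postOf n A (some x) = some y ↔ ∀ z, some z ∈ A → z ≤ x ∨ y ≤ z := by
  have hlabel : ∀ z, some z ∈ A → x < z →
      z ∈ (Finset.Icc 1 n).filter (fun z => some z ∈ A ∧ x < z) := fun z hz hxz =>
    Finset.mem_filter.mpr ⟨Finset.mem_Icc.mpr (hA.1 z hz), hz, hxz⟩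
  simp only [postOf]
  split_ifs with hne <;> rw [Option.some.injEq]
  · set w := Finset.min' _ hne
    obtain ⟨hw, hwA, hxw⟩ := Finset.mem_filter.mp (Finset.min'_mem _ hne)
    have hwn := (Finset.mem_Icc.mp hw).2
    constructor
    · rintro rfl z hz
      by_contra! h
      exact absurd (Finset.min'_le _ z (hlabel z hz h.1)) (not_le.mpr h.2)
    · intro h
      have hyw : y ≤ w := (h w hwA).resolve_left (not_le.mpr hxw)
      rcases mem_extStr_some.mp hy with rfl | hyA | rfl
      · omega
      · exact le_antisymm (Finset.min'_le _ y (hlabel y hyA hxy)) hyw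
      · omega
  · constructor
    · rintro rfl z hz
      by_contra! h
      exact hne ⟨z, hlabel z hz h.1⟩
    · intro _
      rcases mem_extStr_some.mp hy with rfl | hyA | rfl
      · omega
      · exact absurd ⟨y, hlabel y hyA hxy⟩ hne
      · rfl

theorem antOf_eq_some_iff (hA : ValidString n A) {x y : ℕ} (hyx : y < x)
    (hx : some x ∈ extStr n A) (hy : some y ∈ extStr n A) :
    antOf n A (some x) = some y ↔ ∀ z, some z ∈ A → z ≤ y ∨ x ≤ z := by
  have hlabel : ∀ z, some z ∈ A → z < x →
      z ∈ (Finset.Icc 1 n).filter (fun z => some z ∈ A ∧ z < x) := fun z hz hzx =>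
    Finset.mem_filter.mpr ⟨Finset.mem_Icc.mpr (hA.1 z hz), hz, hzx⟩
  have hxn := le_of_some_mem_extStr hA hx
  simp only [antOf]
  split_ifs with hne <;> rw [Option.some.injEq]
  · set w := Finset.max' _ hne
    obtain ⟨hw, hwA, hwx⟩ := Finset.mem_filter.mp (Finset.max'_mem _ hne)
    have hw1 := (Finset.mem_Icc.mp hw).1
    constructor
    · rintro rfl z hz
      by_contra! h
      exact absurd (Finset.le_max' _ z (hlabel z hz h.2)) (not_le.mpr h.1)
    · intro h
      have hwy : w ≤ y := (h w hwA).resolve_right (not_le.mpr hwx)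
      rcases mem_extStr_some.mp hy with rfl | hyA | rfl
      · omega
      · exact le_antisymm hwy (Finset.le_max' _ y (hlabel y hyA hyx))
      · omega
  · constructor
    · rintro rfl z hz
      by_contra! h
      exact hne ⟨z, hlabel z hz h.2⟩
    · intro _
      rcases mem_extStr_some.mp hy with rfl | hyA | rfl
      · rfl
      · exact absurd ⟨y, hlabel y hyA hyx⟩ hne
      · omega

theorem antOf_eq_some_iff_postOf_eq_some (hA : ValidString n A) {x y : ℕ}
    (hx : some x ∈ extStr n A) (hy : some y ∈ extStr n A) (hxn : x ≤ n) (hy1 : 1 ≤ y) :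
    antOf n A (some y) = some x ↔ postOf n A (some x) = some y := by
  constructor
  · intro h
    have hxy : x < y := by rcases lt_or_eq_of_antOf_eq h with h | h <;> omega
    exact (postOf_eq_some_iff hA hxy hy).mpr ((antOf_eq_some_iff hA hxy hy hx).mp h)
  · intro h
    have hxy : x < y := by rcases lt_or_eq_of_postOf_eq h with h | h <;> omega
    exact (antOf_eq_some_iff hA hxy hy hx).mpr ((postOf_eq_some_iff hA hxy hy).mp h)

theorem isBreakR_symm (hA : ValidString n A) {u v : Gene} (hu : u ∈ extStr n A)
    (hv : v ∈ extStr n A) (h : IsBreakR n A u v) : IsBreakR n A v u := by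
  contrapose h
  simp only [IsBreakR, not_and_or, not_ne_iff] at h ⊢
  rcases u with _ | x <;> rcases v with _ | y
  · exact h
  · simp only [postOf, antOf] at h; split_ifs at h <;> simp at h
  · simp [postOf, antOf] at h
  rcases eq_or_ne x y with rfl | hne
  · exact h
  have hx := le_of_some_mem_extStr hA hu
  have hy := le_of_some_mem_extStr hA hv
  rcases h with h | h
  · have hyx : y < x := by rcases lt_or_eq_of_postOf_eq h.symm with h | h <;> omega
    exact Or.inr ((antOf_eq_some_iff_postOf_eq_some hA hv hu (by omega) (by omega)).mpr h.symm).symm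
  · have hxy : x < y := by rcases lt_or_eq_of_antOf_eq h.symm with h | h <;> omega
    exact Or.inl ((antOf_eq_some_iff_postOf_eq_some hA hu hv (by omega) (by omega)).mp h.symm).symm

theorem isBreakR_iff_of_perm {A' : List Gene} (h : A'.Perm A) (u v : Gene) :
    IsBreakR n A' u v ↔ IsBreakR n A u v := by
  have hpost : postOf n A' = postOf n A := by funext u; cases u <;> simp [postOf, h.mem_iff]
  have hant : antOf n A' = antOf n A := by funext u; cases u <;> simp [antOf, h.mem_iff]
  rw [IsBreakR, IsBreakR, hpost, hant]

instance : DecidableRel (IsBreakR n A) :=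
  fun _ _ => inferInstanceAs (Decidable (_ ∧ _))

theorem length_extStr : (extStr n A).length = A.length + 2 := by simp [extStr]

theorem bR_eq_countPairs : bR n A = (extStr n A).countPairs (IsBreakR n A) := by
  have h := List.card_filter_range_eq_countPairs (IsBreakR n A) (extStr n A) none
  rw [length_extStr] at h
  exact h

theorem extStr_reverse_segment {a b : ℕ} (hab : a ≤ b) (hb : b ≤ A.length) :
    extStr n (A.take a ++ ((A.drop a).take (b - a)).reverse ++ A.drop b) =
      (extStr n A).take (a + 1) ++ (((extStr n A).drop (a + 1)).take (b - a)).reverse ++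
        (extStr n A).drop (b + 1) := by
  simp [extStr, List.take_append_of_le_length (by omega : a ≤ A.length),
    List.drop_append_of_le_length (by omega : a ≤ A.length),
    List.drop_append_of_le_length hb,
    List.take_append_of_le_length (by simp; omega : b - a ≤ (A.drop a).length)]

theorem none_notMem_extStr (hno : (none : Gene) ∉ A) : (none : Gene) ∉ extStr n A := by
  simpa [extStr] using hno

theorem getD_extStr_mem_extStr {t : ℕ} (ht : t < A.length + 2) :
    (extStr n A).getD t none ∈ extStr n A := by
  rw [List.getD_eq_getElem _ _ (by rw [length_extStr]; exact ht)]
  exact List.getElem_mem _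

theorem exists_getD_extStr_eq_some (hno : (none : Gene) ∉ A) {t : ℕ} (ht : t < A.length + 2) :
    ∃ x, (extStr n A).getD t none = some x :=
  Option.ne_none_iff_exists'.mp fun h => none_notMem_extStr hno (h ▸ getD_extStr_mem_extStr ht)

theorem getD_extStr_mem {t : ℕ} (h1 : 1 ≤ t) (h2 : t ≤ A.length) :
    (extStr n A).getD t none ∈ A := by
  obtain ⟨s, rfl⟩ : ∃ s, t = s + 1 := ⟨t - 1, by omega⟩
  rw [List.getD_eq_getElem _ _ (by rw [length_extStr]; omega)]
  simp [extStr, List.getElem_append_left (by omega : s < A.length)]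

theorem getD_extStr_length_add_one : (extStr n A).getD (A.length + 1) none = some (n + 1) := by
  simp [extStr]

theorem one_le_of_getD_extStr_eq_some (hA : ValidString n A) {t x : ℕ} (h0 : 0 < t)
    (ht : t < A.length + 2) (hx : (extStr n A).getD t none = some x) : 1 ≤ x := by
  rcases Nat.lt_or_ge t (A.length + 1) with h | h
  · exact (hA.1 x (hx ▸ getD_extStr_mem h0 (by omega))).1
  · rw [show t = A.length + 1 by omega, getD_extStr_length_add_one] at hx
    have := Option.some.inj hx
    omega

theorem le_length_of_getD_extStr_eq_some {t x : ℕ} (ht : t < A.length + 2)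
    (hx : (extStr n A).getD t none = some x) (hxn : x ≤ n) : t ≤ A.length := by
  by_contra h
  rw [show t = A.length + 1 by omega, getD_extStr_length_add_one] at hx
  have := Option.some.inj hx
  omega

theorem nodup_extStr (hA : ValidString n A) (hno : (none : Gene) ∉ A) : (extStr n A).Nodup := by
  have hAnd : A.Nodup := by
    rw [List.nodup_iff_count_le_one]
    rintro (_ | x)
    · simp [List.count_eq_zero_of_not_mem hno]
    · exact hA.2 x
  have h0 : some 0 ∉ A := fun h => by have := hA.1 0 h; omega
  have hn : some (n + 1) ∉ A := fun h => by have := hA.1 (n + 1) h; omega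
  simp only [extStr, List.nodup_cons, List.nodup_append, List.mem_append, List.mem_singleton]
  refine ⟨by simp [h0], hAnd, by simp, ?_⟩
  rintro a ha b rfl rfl
  exact hn ha

theorem getD_extStr_injective (hA : ValidString n A) (hno : (none : Gene) ∉ A) {s t : ℕ}
    (hs : s < A.length + 2) (ht : t < A.length + 2)
    (h : (extStr n A).getD s none = (extStr n A).getD t none) : s = t := by
  rw [List.getD_eq_getElem _ _ (by rw [length_extStr]; exact hs),
    List.getD_eq_getElem _ _ (by rw [length_extStr]; exact ht)] at h
  exact (nodup_extStr hA hno).getElem_inj_iff.mp h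

def BreakAt (n : ℕ) (A : List Gene) (t : ℕ) : Prop :=
  IsBreakR n A ((extStr n A).getD t none) ((extStr n A).getD (t + 1) none)

theorem exists_revN_bR_add_one_le (hA : ValidString n A) {a b : ℕ} (hab : a < b)
    (hb : b ≤ A.length) (hbreak_a : BreakAt n A a) (hbreak_b : BreakAt n A b)
    (hadj : ¬IsBreakR n A ((extStr n A).getD a none) ((extStr n A).getD b none)) :
    ∃ A', RevN A A' ∧ bR n A' + 1 ≤ bR n A := by
  set M := (A.drop a).take (b - a)
  have hsplit : A.take a ++ M ++ A.drop b = A := by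
    rw [List.append_assoc, show b = a + (b - a) by omega, ← List.drop_drop, List.take_append_drop,
      List.take_append_drop]
  have hperm : (A.take a ++ M.reverse ++ A.drop b).Perm A := by
    conv_rhs => rw [← hsplit]
    exact ((List.reverse_perm M).append_left _).append_right _
  refine ⟨A.take a ++ M.reverse ++ A.drop b, ⟨a + 1, b, by omega, by omega, hb, ?_⟩, ?_⟩
  · rw [Nat.add_sub_cancel, show b - (a + 1) + 1 = b - a by omega]
  have hlen : (extStr n A).length = A.length + 2 := length_extStr
  rw [bR_eq_countPairs, bR_eq_countPairs, List.countPairs_congr _ (isBreakR_iff_of_perm hperm),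
    extStr_reverse_segment hab.le hb]
  simp only [BreakAt, List.getD_eq_getElem _ _ (by omega : a < (extStr n A).length),
    List.getD_eq_getElem _ _ (by omega : a + 1 < (extStr n A).length),
    List.getD_eq_getElem _ _ (by omega : b < (extStr n A).length),
    List.getD_eq_getElem _ _ (by omega : b + 1 < (extStr n A).length)] at hbreak_a hbreak_b hadj
  exact List.countPairs_reverse_segment_add_one_le _ hab (by omega)
    (fun u hu v hv => isBreakR_symm hA hu hv) hbreak_a hbreak_b hadj

def IsDecStripEnd (n : ℕ) (A : List Gene) (t : ℕ) : Prop :=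
  1 ≤ t ∧ t ≤ A.length ∧ BreakAt n A t ∧
    (BreakAt n A (t - 1) ∨
      (extStr n A).getD t none = antOf n A ((extStr n A).getD (t - 1) none))

theorem exists_isDecStripEnd_le (hA : ValidString n A) (hno : (none : Gene) ∉ A) {t v : ℕ}
    (ht : t + 1 ≤ A.length)
    (hdesc : (extStr n A).getD (t + 1) none = antOf n A ((extStr n A).getD t none))
    (hv : (extStr n A).getD (t + 1) none = some v) :
    ∃ t' v', IsDecStripEnd n A t' ∧ (extStr n A).getD t' none = some v' ∧ v' ≤ v := by
  by_cases hbreak : BreakAt n A (t + 1)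
  · exact ⟨t + 1, v, ⟨by omega, ht, hbreak, Or.inr hdesc⟩, hv, le_rfl⟩
  have hvn := hA.1 v (hv ▸ getD_extStr_mem (by omega) ht)
  have hvE : some v ∈ extStr n A := hv ▸ getD_extStr_mem_extStr (by omega)
  obtain ⟨w, hw⟩ := exists_getD_extStr_eq_some hno (t := t) (by omega)
  have hwE : some w ∈ extStr n A := hw ▸ getD_extStr_mem_extStr (by omega)
  rw [hw, hv] at hdesc
  have hvw : v < w := by rcases lt_or_eq_of_antOf_eq hdesc.symm with h | h <;> omega
  obtain ⟨v', hv'⟩ := exists_getD_extStr_eq_some hno (t := t + 1 + 1) (by omega)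
  simp only [BreakAt, IsBreakR, not_and_or, not_ne_iff, hv] at hbreak
  rw [hv'] at hbreak
  rcases hbreak with hpost | hant
  · -- the strip would return to `w`, which already sits at position `t`
    have hpost' : postOf n A (some v) = some w :=
      (antOf_eq_some_iff_postOf_eq_some hA hvE hwE (by omega) (by omega)).mp hdesc.symm
    have := getD_extStr_injective hA hno (s := t + 1 + 1) (t := t) (by omega) (by omega)
      (by rw [hv', hw, hpost, hpost'])
    omega
  · have hv'v : v' < v := by
      have := one_le_of_getD_extStr_eq_some hA (by omega) (by omega) hv'
      rcases lt_or_eq_of_antOf_eq hant.symm with h | h <;> omega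
    obtain ⟨t', v'', hend, hv'', hle⟩ := exists_isDecStripEnd_le hA hno (t := t + 1)
      (le_length_of_getD_extStr_eq_some (by omega) hv' (by omega)) (by rw [hv', hv]; exact hant) hv'
    exact ⟨t', v'', hend, hv'', by omega⟩
termination_by A.length - t

theorem HasDecStrip.exists_isDecStripEnd (hA : ValidString n A) (hno : (none : Gene) ∉ A)
    (h : HasDecStrip n A) :
    ∃ k t, IsDecStripEnd n A t ∧ (extStr n A).getD t none = some k := by
  rw [HasDecStrip, length_extStr] at h
  rcases h with ⟨t, ht, hne, hant⟩ | ⟨t, ht1, ht, hne, hleft, hright⟩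
  · obtain ⟨w, hw⟩ := Option.ne_none_iff_exists'.mp hne
    have hwn := le_of_some_mem_extStr hA (hw ▸ getD_extStr_mem_extStr (by omega))
    obtain ⟨v, hv⟩ := exists_getD_extStr_eq_some hno (t := t + 1) (by omega)
    have hvn : v ≤ n := by
      rcases lt_or_eq_of_antOf_eq (hv.symm.trans (hw ▸ hant)).symm with h | h <;> omega
    obtain ⟨t', v', hend, hv', -⟩ := exists_isDecStripEnd_le hA hno
      (le_length_of_getD_extStr_eq_some (by omega) hv hvn) hant hv
    exact ⟨v', t', hend, hv'⟩
  · obtain ⟨k, hk⟩ := Option.ne_none_iff_exists'.mp hne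
    refine ⟨k, t, ⟨ht1, by omega, hright, Or.inl ?_⟩, hk⟩
    rwa [BreakAt, Nat.sub_add_cancel ht1]

theorem exists_getD_extStr_eq_antOf (hA : ValidString n A) (hno : (none : Gene) ∉ A) {k : ℕ}
    (hk : some k ∈ A) :
    ∃ q m, q ≤ A.length ∧ (extStr n A).getD q none = some m ∧
      antOf n A (some k) = some m := by
  obtain ⟨q, hq, hqk⟩ := List.getElem_of_mem (antOf_some_mem_extStr (n := n) (A := A) k)
  rw [← List.getD_eq_getElem _ none] at hqk
  rw [length_extStr] at hq
  obtain ⟨m, hm⟩ := exists_getD_extStr_eq_some hno hq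
  rw [hm] at hqk
  have hkn := hA.1 k hk
  have hmn : m ≤ n := by rcases lt_or_eq_of_antOf_eq hqk.symm with h | h <;> omega
  exact ⟨q, m, le_length_of_getD_extStr_eq_some hq hm hmn, hm, hqk.symm⟩

theorem breakAt_antOf_of_minimal (hA : ValidString n A) (hno : (none : Gene) ∉ A)
    {t₀ k q m : ℕ} (hend : IsDecStripEnd n A t₀) (hk : (extStr n A).getD t₀ none = some k)
    (hmin : ∀ t k', IsDecStripEnd n A t → (extStr n A).getD t none = some k' → k ≤ k')
    (hqN : q ≤ A.length) (hq : (extStr n A).getD q none = some m)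
    (hm : antOf n A (some k) = some m) : BreakAt n A q := by
  obtain ⟨ht₁, ht₀N, -, hleft⟩ := hend
  have hkn := hA.1 k (hk ▸ getD_extStr_mem ht₁ ht₀N)
  have hmk : m < k := by rcases lt_or_eq_of_antOf_eq hm with h | h <;> omega
  have hmE : some m ∈ extStr n A := hq ▸ getD_extStr_mem_extStr (by omega)
  have hkE : some k ∈ extStr n A := hk ▸ getD_extStr_mem_extStr (by omega)
  have hpost : postOf n A (some m) = some k :=
    (antOf_eq_some_iff_postOf_eq_some hA hmE hkE (by omega) (by omega)).mp hm
  obtain ⟨v, hv⟩ := exists_getD_extStr_eq_some hno (t := q + 1) (by omega)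
  by_contra hbreak
  simp only [BreakAt, IsBreakR, not_and_or, not_ne_iff] at hbreak
  rw [hq] at hbreak
  rcases hbreak with hsucc | hpred
  · -- then `k` follows `m` at position `t₀ = q + 1`, an increasing adjacency
    have hq₁ : q + 1 = t₀ := getD_extStr_injective hA hno (by omega) (by omega)
      (by rw [hk, hsucc, hpost])
    subst hq₁
    rw [Nat.add_sub_cancel, hq, hsucc, hpost] at hleft
    rcases hleft with hleft | hleft
    · exact hleft.1 (by rw [hq]; exact hsucc)
    · rcases lt_or_eq_of_antOf_eq hleft.symm with h | h <;> omega
  · -- then a decreasing strip runs through position `q + 1` and ends below `k`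
    rw [hv] at hpred
    have hvm : v < m := by
      have := one_le_of_getD_extStr_eq_some hA (by omega) (by omega) hv
      rcases lt_or_eq_of_antOf_eq hpred.symm with h | h <;> omega
    obtain ⟨t', v', hend', hv', hle⟩ := exists_isDecStripEnd_le hA hno
      (le_length_of_getD_extStr_eq_some (by omega) hv (by omega)) (by rw [hv, hq]; exact hpred) hv
    have := hmin t' v' hend' hv'
    omega

end

theorem reversal_removes_breakpoint_with_decreasing_strip_general
    (n : ℕ) (A : List Gene) (hA : ValidString n A)
    (hNoAlpha : (none : Gene) ∉ A)
    (hdec : HasDecStrip n A) :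
    ∃ A' : List Gene, RevN A A' ∧ bR n A' + 1 ≤ bR n A := by
  classical
  have hex := hdec.exists_isDecStripEnd hA hNoAlpha
  obtain ⟨t₀, hend, hk⟩ := Nat.find_spec hex
  set k := Nat.find hex
  have hmin : ∀ t k', IsDecStripEnd n A t → (extStr n A).getD t none = some k' → k ≤ k' :=
    fun t k' h hk' => Nat.find_min' hex ⟨t, h, hk'⟩
  have ⟨ht₁, ht₀N, hbreak_t₀, _⟩ := hend
  have hkA : some k ∈ A := hk ▸ getD_extStr_mem ht₁ ht₀N
  obtain ⟨q, m, hqN, hq, hm⟩ := exists_getD_extStr_eq_antOf hA hNoAlpha hkA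
  have hbreak_q := breakAt_antOf_of_minimal hA hNoAlpha hend hk hmin hqN hq hm
  have hmk : m < k := by
    have := hA.1 k hkA
    rcases lt_or_eq_of_antOf_eq hm with h | h <;> omega
  have hqt₀ : q ≠ t₀ := by
    rintro rfl
    have := Option.some.inj (hq.symm.trans hk)
    omega
  rcases Nat.lt_or_gt_of_ne hqt₀ with hlt | hlt
  · refine exists_revN_bR_add_one_le hA hlt ht₀N hbreak_q hbreak_t₀ ?_
    rw [hq, hk]
    have hmE : some m ∈ extStr n A := hq ▸ getD_extStr_mem_extStr (by omega)
    have hkE : some k ∈ extStr n A := hk ▸ getD_extStr_mem_extStr (by omega)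
    exact fun h => (isBreakR_symm hA hmE hkE h).2 hm.symm
  · refine exists_revN_bR_add_one_le hA hlt hqN hbreak_t₀ hbreak_q ?_
    rw [hk, hq]
    exact fun h => h.2 hm.symm

/-- For any classical instance `I = (A, ι^n)` of unsigned strings such
that `b_ρ(I) > 0`, `Σ_A \ Σ_{ι^n} = ∅` (A contains no α-element), and `A` has at least one
decreasing strip, there exists a reversal removing at least one unsigned-reversal
breakpoint of `A`. -/
theorem reversal_removes_breakpoint_with_decreasing_strip
    (n : ℕ) (A : List Gene) (hA : ValidString n A)
    (hb : 0 < bR n A) (hNoAlpha : (none : Gene) ∉ A)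
    (hdec : HasDecStrip n A) :
    ∃ A' : List Gene, RevN A A' ∧ bR n A' + 1 ≤ bR n A :=
  reversal_removes_breakpoint_with_decreasing_strip_general n A hA hNoAlpha hdec
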